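/- Work with a finite oriented multigraph given by finite types V (vertices) and E (edges) together with maps s t : E → V, with V nonempty. Assume the multigraph has no loops and is connected. Let θ : Equiv.Perm V and let M : Matrix E E ℤ be a chain map over θ that is HTC. Then for every natural number m with 1 ≤ m such that θ ^ m has no fixed points (i.e., (θ ^ m) x ≠ x for every x : V), one has Matrix.trace (M ^ m) = -1. -/

import Mathlib

/-!
Over `ℚ`, a matrix killing the kernel of `∂` factors through `∂`, so `M = L * ∂` and
`trace M = trace (∂ * L)`. The matrix `Q := ∂ * L - P_θ` satisfies `Q * ∂ = 0`, so on a
connected graph each row of `Q` is constant and `trace Q` is a column sum of `Q`; this is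
`0 - 1 = -1`, since the columns of `∂` sum to `0` and those of `P_θ` to `1`. As `θ` has no fixed
points, `trace P_θ = 0`. Iterates `M ^ m` are again HTC chain maps, over `θ ^ m`.
-/

/-- The boundary matrix of a finite oriented multigraph with source map `s`
and target map `t`: `∂ v e = [v = t e] - [v = s e]`. -/
def boundaryMatrix {V E : Type*} [DecidableEq V] (s t : E → V) : Matrix V E ℤ :=
  fun v e => (if v = t e then 1 else 0) - (if v = s e then 1 else 0)

/-- The permutation matrix of `θ`: `P_θ u w = [u = θ w]`. -/
def permMatrix {V : Type*} [DecidableEq V] (θ : Equiv.Perm V) : Matrix V V ℤ :=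
  fun u w => if u = θ w then 1 else 0

/-- `M` is a chain map over the vertex permutation `θ`: `∂ * M = P_θ * ∂`. -/
def IsChainMap {V E : Type*} [DecidableEq V] [Fintype V] [Fintype E]
    (s t : E → V) (θ : Equiv.Perm V) (M : Matrix E E ℤ) : Prop :=
  boundaryMatrix s t * M = permMatrix θ * boundaryMatrix s t

/-- `M` is HTC (homotopic-to-a-constant-map condition): `M` annihilates the
cycle space, i.e. the kernel of the boundary matrix. -/
def IsHTC {V E : Type*} [DecidableEq V] [Fintype E]
    (s t : E → V) (M : Matrix E E ℤ) : Prop :=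
  ∀ x : E → ℤ, (boundaryMatrix s t).mulVec x = 0 → M.mulVec x = 0

/-- The multigraph has no loops: `s e ≠ t e` for every edge. -/
def NoLoops {V E : Type*} (s t : E → V) : Prop :=
  ∀ e : E, s e ≠ t e

/-- The multigraph is connected: the smallest equivalence relation relating
`s e` and `t e` for every edge `e` is the total relation. -/
def IsConn {V E : Type*} (s t : E → V) : Prop :=
  ∀ u v : V, Relation.EqvGen (fun a b => ∃ e : E, s e = a ∧ t e = b) u v

open scoped Matrix

theorem LinearMap.exists_comp_eq_of_ker_le {K V W U : Type*} [Field K] [AddCommGroup V]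
    [Module K V] [AddCommGroup W] [Module K W] [AddCommGroup U] [Module K U]
    (f : V →ₗ[K] W) (g : V →ₗ[K] U) (h : ker f ≤ ker g) :
    ∃ l : W →ₗ[K] U, l ∘ₗ f = g := by
  obtain ⟨ψ, hψ⟩ := ((ker f).liftQ f le_rfl).exists_leftInverse_of_injective
    ((ker f).ker_liftQ_eq_bot f le_rfl le_rfl)
  refine ⟨(ker f).liftQ g h ∘ₗ ψ, LinearMap.ext fun x => ?_⟩
  have hx : ψ (f x) = (ker f).mkQ x := LinearMap.congr_fun hψ ((ker f).mkQ x)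
  simp [hx]

theorem Matrix.exists_eq_mul_of_ker_mulVec_le {K m n p : Type*} [Field K] [Fintype m]
    [DecidableEq m] [Fintype n] [DecidableEq n] (B : Matrix m n K) (N : Matrix p n K)
    (h : ∀ x, B *ᵥ x = 0 → N *ᵥ x = 0) : ∃ L : Matrix p m K, N = L * B := by
  obtain ⟨l, hl⟩ := (toLin' B).exists_comp_eq_of_ker_le (toLin' N) fun x hx => h x hx
  refine ⟨LinearMap.toMatrix' l, toLin'.injective ?_⟩
  rw [toLin'_mul, toLin'_toMatrix', hl]

theorem Matrix.mulVec_map_intCast_eq_zero {m n p : Type*} [Fintype n] {A : Matrix m n ℤ}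
    {N : Matrix p n ℤ} (h : ∀ y, A *ᵥ y = 0 → N *ᵥ y = 0) {x : n → ℚ}
    (hx : A.map (Int.castRingHom ℚ) *ᵥ x = 0) : N.map (Int.castRingHom ℚ) *ᵥ x = 0 := by
  obtain ⟨b, hb⟩ := IsLocalization.exist_integer_multiples_of_finite (nonZeroDivisors ℤ) x
  choose y hy using hb
  have hyx : Int.castRingHom ℚ ∘ y = ((b : ℤ) : ℚ) • x := funext fun e => by
    simpa [Algebra.smul_def] using hy e
  have hAy : A *ᵥ y = 0 := funext fun i => by
    have := RingHom.map_mulVec (Int.castRingHom ℚ) A y i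
    rw [hyx, mulVec_smul, hx, smul_zero] at this
    simpa using this
  have hb0 : ((b : ℤ) : ℚ) ≠ 0 := by exact_mod_cast nonZeroDivisors.coe_ne_zero b
  funext i
  have := RingHom.map_mulVec (Int.castRingHom ℚ) N y i
  rw [h y hAy, hyx, mulVec_smul] at this
  simpa [hb0] using this.symm

section Graph

variable {V E : Type*} [DecidableEq V] {s t : E → V}

theorem permMatrix_one : permMatrix (1 : Equiv.Perm V) = 1 := by
  ext u w
  simp only [permMatrix, Matrix.one_apply, Equiv.Perm.one_apply]
  grind

theorem IsHTC.mul_left [Fintype E] {M : Matrix E E ℤ} (hM : IsHTC s t M) (N : Matrix E E ℤ) :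
    IsHTC s t (N * M) :=
  fun x hx => by rw [← Matrix.mulVec_mulVec, hM x hx, Matrix.mulVec_zero]

variable [Fintype V]

theorem sum_boundaryMatrix_apply (e : E) : ∑ v, boundaryMatrix s t v e = 0 := by
  simp [boundaryMatrix, Finset.sum_sub_distrib]

theorem vecMul_map_boundaryMatrix_apply {R : Type*} [CommRing R] (q : V → R) (e : E) :
    (q ᵥ* (boundaryMatrix s t).map (Int.castRingHom R)) e = q (t e) - q (s e) := by
  simp [Matrix.vecMul, dotProduct, boundaryMatrix, mul_sub, Finset.sum_sub_distrib]

theorem IsConn.eq_of_vecMul_map_boundaryMatrix_eq_zero {R : Type*} [CommRing R]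
    (hconn : IsConn s t) {q : V → R}
    (hq : q ᵥ* (boundaryMatrix s t).map (Int.castRingHom R) = 0) (u v : V) : q u = q v := by
  induction hconn u v with
  | rel a b hab =>
    obtain ⟨e, rfl, rfl⟩ := hab
    have he := congrFun hq e
    rw [vecMul_map_boundaryMatrix_apply, Pi.zero_apply, sub_eq_zero] at he
    exact he.symm
  | refl => rfl
  | symm _ _ _ ih => exact ih.symm
  | trans _ _ _ _ _ ih₁ ih₂ => exact ih₁.trans ih₂

theorem sum_permMatrix_apply (σ : Equiv.Perm V) (w : V) : ∑ u, permMatrix σ u w = 1 := by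
  simp [permMatrix]

theorem trace_permMatrix_eq_zero {σ : Equiv.Perm V} (hσ : ∀ v, σ v ≠ v) :
    Matrix.trace (permMatrix σ) = 0 :=
  Finset.sum_eq_zero fun v _ => if_neg (hσ v).symm

theorem permMatrix_mul (σ τ : Equiv.Perm V) :
    permMatrix (σ * τ) = permMatrix σ * permMatrix τ := by
  ext u w
  simp [permMatrix, Matrix.mul_apply]
  grind

theorem permMatrix_pow (σ : Equiv.Perm V) (k : ℕ) : permMatrix (σ ^ k) = permMatrix σ ^ k := by
  induction k with
  | zero => exact permMatrix_one
  | succ k ih => rw [pow_succ, permMatrix_mul, ih, pow_succ]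

variable [Fintype E]

theorem trace_mul_map_boundaryMatrix_eq_neg_one {R : Type*} [CommRing R] [Nonempty V]
    (hconn : IsConn s t) {σ : Equiv.Perm V} (hσ : ∀ v, σ v ≠ v) (L : Matrix E V R)
    (hL : (boundaryMatrix s t).map (Int.castRingHom R) * L *
        (boundaryMatrix s t).map (Int.castRingHom R) =
      (permMatrix σ).map (Int.castRingHom R) * (boundaryMatrix s t).map (Int.castRingHom R)) :
    Matrix.trace (L * (boundaryMatrix s t).map (Int.castRingHom R)) = -1 := by
  set B := (boundaryMatrix s t).map (Int.castRingHom R)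
  set P := (permMatrix σ).map (Int.castRingHom R)
  set Q := B * L - P with hQdef
  obtain ⟨u₀⟩ := ‹Nonempty V›
  have hQ : Q * B = 0 := by rw [hQdef, Matrix.sub_mul, hL, sub_self]
  have hrow : ∀ w u, Q w u = Q w u₀ := fun w u =>
    hconn.eq_of_vecMul_map_boundaryMatrix_eq_zero (congrFun hQ w) u u₀
  have hcolB : ∑ w, (B * L) w u₀ = 0 := by
    simp only [Matrix.mul_apply]
    rw [Finset.sum_comm]
    refine Finset.sum_eq_zero fun e _ => ?_
    rw [← Finset.sum_mul]
    simp [B, ← Int.cast_sum, sum_boundaryMatrix_apply]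
  have hcolP : ∑ w, P w u₀ = 1 := by
    simp [P, ← Int.cast_sum, sum_permMatrix_apply]
  have htrP : Matrix.trace P = 0 := by
    rw [← AddMonoidHom.map_trace, trace_permMatrix_eq_zero hσ, map_zero]
  have htrQ : Matrix.trace Q = -1 := calc
    Matrix.trace Q = ∑ w, Q w u₀ := Finset.sum_congr rfl fun w _ => hrow w w
    _ = ∑ w, (B * L) w u₀ - ∑ w, P w u₀ := Finset.sum_sub_distrib ..
    _ = -1 := by rw [hcolB, hcolP, zero_sub]
  calc Matrix.trace (L * B) = Matrix.trace (B * L) := Matrix.trace_mul_comm L B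
    _ = Matrix.trace P + Matrix.trace Q := by rw [← Matrix.trace_add, add_sub_cancel]
    _ = -1 := by rw [htrP, htrQ, zero_add]

variable [DecidableEq E] {θ : Equiv.Perm V} {M : Matrix E E ℤ}

theorem IsChainMap.pow (hM : IsChainMap s t θ M) (k : ℕ) : IsChainMap s t (θ ^ k) (M ^ k) := by
  rw [IsChainMap, permMatrix_pow]
  induction k with
  | zero => rw [pow_zero, pow_zero, Matrix.mul_one, Matrix.one_mul]
  | succ k ih => rw [pow_succ, ← Matrix.mul_assoc, ih, Matrix.mul_assoc, hM, ← Matrix.mul_assoc,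
      pow_succ]

theorem IsChainMap.trace_eq_neg_one [Nonempty V] (hconn : IsConn s t)
    (hθ : ∀ v, θ v ≠ v) (hM : IsChainMap s t θ M) (hHTC : IsHTC s t M) : M.trace = -1 := by
  obtain ⟨L, hL⟩ :=
    ((boundaryMatrix s t).map (Int.castRingHom ℚ)).exists_eq_mul_of_ker_mulVec_le
      (M.map (Int.castRingHom ℚ)) fun _ hx => Matrix.mulVec_map_intCast_eq_zero hHTC hx
  have hchain := trace_mul_map_boundaryMatrix_eq_neg_one hconn hθ L <| by
    rw [Matrix.mul_assoc, ← hL, ← Matrix.map_mul, hM, Matrix.map_mul]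
  rw [← hL, ← AddMonoidHom.map_trace, eq_intCast] at hchain
  exact_mod_cast hchain

end Graph

theorem trace_pow_eq_neg_one_of_pow_fixedPointFree_general
    {V E : Type*} [Fintype V] [DecidableEq V] [Fintype E] [DecidableEq E] [Nonempty V]
    (s t : E → V) (hconn : IsConn s t)
    (θ : Equiv.Perm V)
    (M : Matrix E E ℤ) (hM : IsChainMap s t θ M) (hMhtc : IsHTC s t M) :
    ∀ m : ℕ, 1 ≤ m → (∀ x : V, (θ ^ m) x ≠ x) → Matrix.trace (M ^ m) = -1 := by
  intro m hm hfix
  obtain ⟨k, rfl⟩ := Nat.exists_eq_add_of_le' hm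
  refine (hM.pow (k + 1)).trace_eq_neg_one hconn hfix ?_
  rw [pow_succ]
  exact hMhtc.mul_left _

theorem trace_pow_eq_neg_one_of_pow_fixedPointFree
    {V E : Type*} [Fintype V] [DecidableEq V] [Fintype E] [DecidableEq E] [Nonempty V]
    (s t : E → V) (hloop : NoLoops s t) (hconn : IsConn s t)
    (θ : Equiv.Perm V)
    (M : Matrix E E ℤ) (hM : IsChainMap s t θ M) (hMhtc : IsHTC s t M) :
    ∀ m : ℕ, 1 ≤ m → (∀ x : V, (θ ^ m) x ≠ x) → Matrix.trace (M ^ m) = -1 :=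
  trace_pow_eq_neg_one_of_pow_fixedPointFree_general s t hconn θ M hM hMhtc
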